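/- Let H be a complex Hilbert space, let Ω ∈ H, and let (V_t)_{t ∈ ℝ} be a family of unitary operators on H such that V_t Ω = Ω and (V_t)* Ω = Ω for all t. Let F be a bounded operator on H with F* = F, and set E = cos(1)·1 + (i·sin(1))·F, so that E* = cos(1)·1 − (i·sin(1))·F. If the function t ↦ ⟨FΩ, V_t(FΩ)⟩ is differentiable at t = 0 with derivative d, then the function t ↦ ⟨E*Ω, V_t(E*Ω)⟩ is differentiable at t = 0 with derivative sin(1)²·d. -/

import Mathlib

open Complex
open scoped InnerProductSpace

/-! Since `V t` and its adjoint fix `Ω`, the coefficients `⟪Ω, V t x⟫` and `⟪x, V t Ω⟫` do not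
depend on `t`. Writing `E* Ω = cos 1 • Ω - (I * sin 1) • F Ω`, only the `F Ω`–`F Ω` term of
`⟪E* Ω, V t (E* Ω)⟫` varies with `t`, and it carries the factor `|I * sin 1|² = sin² 1`. -/

section VacuumInvariant

variable {H : Type*} [NormedAddCommGroup H] [InnerProductSpace ℂ H] [CompleteSpace H]

theorem inner_apply_eq_of_star_apply_eq {T : H →L[ℂ] H} {Ω : H} (hT : star T Ω = Ω) (x : H) :
    ⟪Ω, T x⟫_ℂ = ⟪Ω, x⟫_ℂ := by
  rw [← ContinuousLinearMap.adjoint_inner_left, ← ContinuousLinearMap.star_eq_adjoint, hT]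

theorem inner_smul_add_smul_apply {T : H →L[ℂ] H} {Ω : H} (hT : T Ω = Ω)
    (hT' : star T Ω = Ω) (a b : ℂ) (x : H) :
    ⟪a • Ω + b • x, T (a • Ω + b • x)⟫_ℂ =
      (starRingEnd ℂ a * a * ⟪Ω, Ω⟫_ℂ + starRingEnd ℂ a * b * ⟪Ω, x⟫_ℂ
        + starRingEnd ℂ b * a * ⟪x, Ω⟫_ℂ) + starRingEnd ℂ b * b * ⟪x, T x⟫_ℂ := by
  simp only [map_add, map_smul, inner_add_left, inner_add_right, inner_smul_left,
    inner_smul_right, hT, inner_apply_eq_of_star_apply_eq hT']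
  ring

theorem HasDerivAt.inner_smul_add_smul_apply {V : ℝ → H →L[ℂ] H} {Ω x : H}
    (hV : ∀ t, V t Ω = Ω) (hV' : ∀ t, star (V t) Ω = Ω) (a b : ℂ) {d : ℂ} {t₀ : ℝ}
    (hd : HasDerivAt (fun t => ⟪x, V t x⟫_ℂ) d t₀) :
    HasDerivAt (fun t => ⟪a • Ω + b • x, V t (a • Ω + b • x)⟫_ℂ)
      (starRingEnd ℂ b * b * d) t₀ := by
  simp only [_root_.inner_smul_add_smul_apply (hV _) (hV' _)]
  exact (hd.const_mul _).const_add _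

end VacuumInvariant

theorem star_ofReal_smul_one_add_I_mul_smul {A : Type*} [Ring A] [StarRing A] [Module ℂ A]
    [StarModule ℂ A] {F : A} (hF : IsSelfAdjoint F) (a b : ℝ) :
    star ((a : ℂ) • (1 : A) + (I * b) • F) = (a : ℂ) • 1 + (-(I * b)) • F := by
  simp [star_smul, hF.star_eq]

theorem stmt_10_general {H : Type*} [NormedAddCommGroup H] [InnerProductSpace ℂ H]
    [CompleteSpace H] (Ω : H) (V : ℝ → H →L[ℂ] H)
    (hVΩ : ∀ t : ℝ, V t Ω = Ω)
    (hVadjΩ : ∀ t : ℝ, (star (V t)) Ω = Ω)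
    (F : H →L[ℂ] H) (hF : IsSelfAdjoint F)
    (E : H →L[ℂ] H)
    (hE : E = (Real.cos 1 : ℂ) • (1 : H →L[ℂ] H) + (I * (Real.sin 1 : ℂ)) • F)
    (d : ℂ)
    (hd : HasDerivAt (fun t : ℝ => ⟪F Ω, V t (F Ω)⟫_ℂ) d 0) :
    HasDerivAt (fun t : ℝ => ⟪(star E) Ω, V t ((star E) Ω)⟫_ℂ)
      (((Real.sin 1 : ℂ)) ^ 2 * d) 0 := by
  have hstarE : star E Ω = (Real.cos 1 : ℂ) • Ω + (-(I * Real.sin 1)) • F Ω := by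
    rw [hE, star_ofReal_smul_one_add_I_mul_smul hF]
    rfl
  have hcoeff :
      starRingEnd ℂ (-(I * Real.sin 1)) * (-(I * Real.sin 1)) = (Real.sin 1 : ℂ) ^ 2 := by
    simp only [map_neg, map_mul, conj_I, conj_ofReal]
    linear_combination (-(Real.sin 1 : ℂ) ^ 2) * I_sq
  rw [hstarE, ← hcoeff]
  exact hd.inner_smul_add_smul_apply hVΩ hVadjΩ _ _

/-- If the unitaries `V_t` fix `Ω` (and their adjoints do too), `F` is bounded
self-adjoint, and `E = cos(1)·1 + i·sin(1)·F`, then differentiability at `t = 0`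
of `t ↦ ⟨FΩ, V_t FΩ⟩` with derivative `d` implies differentiability of
`t ↦ ⟨E*Ω, V_t E*Ω⟩` at `t = 0` with derivative `sin(1)²·d`. -/
theorem stmt_10 {H : Type*} [NormedAddCommGroup H] [InnerProductSpace ℂ H]
    [CompleteSpace H] (Ω : H) (V : ℝ → H →L[ℂ] H)
    (hVunit : ∀ t : ℝ, V t ∈ unitary (H →L[ℂ] H))
    (hVΩ : ∀ t : ℝ, V t Ω = Ω)
    (hVadjΩ : ∀ t : ℝ, (star (V t)) Ω = Ω)
    (F : H →L[ℂ] H) (hF : IsSelfAdjoint F)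
    (E : H →L[ℂ] H)
    (hE : E = (Real.cos 1 : ℂ) • (1 : H →L[ℂ] H) + (I * (Real.sin 1 : ℂ)) • F)
    (d : ℂ)
    (hd : HasDerivAt (fun t : ℝ => ⟪F Ω, V t (F Ω)⟫_ℂ) d 0) :
    HasDerivAt (fun t : ℝ => ⟪(star E) Ω, V t ((star E) Ω)⟫_ℂ)
      (((Real.sin 1 : ℂ)) ^ 2 * d) 0 :=
  stmt_10_general Ω V hVΩ hVadjΩ F hF E hE d hd
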